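/- arXiv:1909.03052 — 5 statements merged into one kernel-verified Lean document; each statement's English description precedes it below -/
import Mathlib

section
/- Let (X,d) be a metric space and let S = (X,(φ_j)_{j=1}^L,(p_j)_{j=1}^L) be an IFS with probabilities in which every φ_j is Lipschitz with constant at most α, where α < 1. Then the Markov operator M_S is Lipschitz with constant at most α with respect to the Monge–Kantorovich metric: for all compactly supported Borel probability measures μ, ν on X, d_MK(M_S(μ), M_S(ν)) ≤ α · d_MK(μ, ν); equivalently, for every 1-Lipschitz f : X → ℝ, |∫ f dM_S(μ) − ∫ f dM_S(ν)| ≤ α · d_MK(μ, ν). -/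
open MeasureTheory

/-- The Monge–Kantorovich (Hutchinson) distance between two measures. -/
noncomputable def dMK {X : Type*} [MetricSpace X] [MeasurableSpace X]
    (μ ν : Measure X) : ℝ :=
  sSup {s : ℝ | ∃ f : X → ℝ, LipschitzWith 1 f ∧ s = |∫ x, f x ∂μ - ∫ x, f x ∂ν|}

/-!
Integrating a `1`-Lipschitz `f` against `∑ p_j • φ_j♯μ` gives `∑ p_j ∫ f ∘ φ_j dμ`, and each
`f ∘ φ_j` is `α`-Lipschitz, so `|∫ f ∘ φ_j dμ - ∫ f ∘ φ_j dν| ≤ α d_MK(μ, ν)` after rescaling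
`f ∘ φ_j` by `α⁻¹`. Averaging with the weights `p_j` gives the bound, and taking the supremum over
`f` gives the contraction estimate. Compact supports make every Lipschitz function integrable and
the supremum defining `d_MK` finite.
-/

open scoped NNReal

section Integral

variable {X : Type*} [MeasurableSpace X] {μ : Measure X}

lemma Continuous.integrable_of_measure_compl_eq_zero [TopologicalSpace X] [T2Space X]
    [OpensMeasurableSpace X] [IsFiniteMeasure μ] {K : Set X} (hK : IsCompact K) (hμK : μ Kᶜ = 0) {g : X → ℝ}
    (hg : Continuous g) : Integrable g μ := by
  have hrestrict : μ.restrict K = μ := Measure.restrict_eq_self_of_ae_mem (mem_ae_iff.mpr hμK)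
  simpa only [IntegrableOn, hrestrict] using hg.continuousOn.integrableOn_compact (μ := μ) hK

lemma integral_finsetSum_smul_map {Y ι : Type*} [MeasurableSpace Y] (s : Finset ι) (p : ι → ℝ≥0)
    {φ : ι → X → Y} (hφ : ∀ j, Measurable (φ j)) {f : Y → ℝ} (hf : StronglyMeasurable f)
    (hfφ : ∀ j ∈ s, Integrable (f ∘ φ j) μ) :
    ∫ y, f y ∂(∑ j ∈ s, p j • μ.map (φ j)) = ∑ j ∈ s, (p j : ℝ) * ∫ x, f (φ j x) ∂μ := by
  rw [integral_finsetSum_measure]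
  · refine Finset.sum_congr rfl fun j _ => ?_
    rw [integral_smul_nnreal_measure, integral_map (hφ j).aemeasurable hf.aestronglyMeasurable]
    rfl
  · intro j hj
    exact ((integrable_map_measure hf.aestronglyMeasurable (hφ j).aemeasurable).mpr
      (hfφ j hj)).smul_measure ENNReal.coe_ne_top

end Integral

section MongeKantorovich

variable {X : Type*} [MetricSpace X] [MeasurableSpace X]

lemma dMK_le_of_forall_abs_integral_sub_le {μ ν : Measure X} {C : ℝ} (hC : 0 ≤ C)
    (h : ∀ f : X → ℝ, LipschitzWith 1 f → |∫ x, f x ∂μ - ∫ x, f x ∂ν| ≤ C) : dMK μ ν ≤ C :=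
  Real.sSup_le (by rintro s ⟨f, hf, rfl⟩; exact h f hf) hC

lemma abs_integral_sub_le_of_ae_dist_le {μ : Measure X} [IsProbabilityMeasure μ] {f : X → ℝ}
    (hf : LipschitzWith 1 f) (hfi : Integrable f μ) {c : X} {r : ℝ}
    (hr : ∀ᵐ x ∂μ, dist x c ≤ r) : |∫ x, f x ∂μ - f c| ≤ r := by
  have hshift : ∫ x, f x ∂μ - f c = ∫ x, (f x - f c) ∂μ := by
    rw [integral_sub hfi (integrable_const _), integral_const, probReal_univ, one_smul]
  rw [hshift, ← Real.norm_eq_abs]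
  simpa using norm_integral_le_of_norm_le_const (hr.mono fun x hx =>
    show ‖f x - f c‖ ≤ r by
      rw [← dist_eq_norm]
      exact (hf.dist_le_mul x c).trans (by simpa using hx))

variable [BorelSpace X] {μ ν : Measure X} [IsProbabilityMeasure μ] [IsProbabilityMeasure ν]

lemma bddAbove_abs_integral_sub (hμ : ∃ K : Set X, IsCompact K ∧ μ Kᶜ = 0)
    (hν : ∃ K : Set X, IsCompact K ∧ ν Kᶜ = 0) :
    BddAbove {s : ℝ | ∃ f : X → ℝ, LipschitzWith 1 f ∧ s = |∫ x, f x ∂μ - ∫ x, f x ∂ν|} := by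
  obtain ⟨Kμ, hKμ, hμK⟩ := hμ
  obtain ⟨Kν, hKν, hνK⟩ := hν
  have ⟨c⟩ : Nonempty X := nonempty_of_isProbabilityMeasure μ
  obtain ⟨r, hr⟩ := (hKμ.union hKν).isBounded.subset_closedBall c
  have hdist {ρ : Measure X} {K : Set X} (hK : K ⊆ Kμ ∪ Kν) (hρK : ρ Kᶜ = 0) :
      ∀ᵐ x ∂ρ, dist x c ≤ r :=
    (show ∀ᵐ x ∂ρ, x ∈ K from mem_ae_iff.mpr hρK).mono fun x hx => hr (hK hx)
  refine ⟨r + r, ?_⟩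
  rintro s ⟨f, hf, rfl⟩
  have hfμ := abs_integral_sub_le_of_ae_dist_le hf
    (hf.continuous.integrable_of_measure_compl_eq_zero hKμ hμK) (hdist Set.subset_union_left hμK)
  have hfν := abs_integral_sub_le_of_ae_dist_le hf
    (hf.continuous.integrable_of_measure_compl_eq_zero hKν hνK) (hdist Set.subset_union_right hνK)
  calc |∫ x, f x ∂μ - ∫ x, f x ∂ν| = |(∫ x, f x ∂μ - f c) - (∫ x, f x ∂ν - f c)| := by ring_nf
    _ ≤ |∫ x, f x ∂μ - f c| + |∫ x, f x ∂ν - f c| := abs_sub _ _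
    _ ≤ r + r := add_le_add hfμ hfν

lemma abs_integral_sub_le_dMK (hμ : ∃ K : Set X, IsCompact K ∧ μ Kᶜ = 0)
    (hν : ∃ K : Set X, IsCompact K ∧ ν Kᶜ = 0) {f : X → ℝ} (hf : LipschitzWith 1 f) :
    |∫ x, f x ∂μ - ∫ x, f x ∂ν| ≤ dMK μ ν :=
  le_csSup (bddAbove_abs_integral_sub hμ hν) ⟨f, hf, rfl⟩

lemma dMK_nonneg (hμ : ∃ K : Set X, IsCompact K ∧ μ Kᶜ = 0)
    (hν : ∃ K : Set X, IsCompact K ∧ ν Kᶜ = 0) : 0 ≤ dMK μ ν :=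
  (abs_nonneg _).trans (abs_integral_sub_le_dMK hμ hν (LipschitzWith.const' (0 : ℝ)))

lemma LipschitzWith.abs_integral_sub_le_mul_dMK (hμ : ∃ K : Set X, IsCompact K ∧ μ Kᶜ = 0)
    (hν : ∃ K : Set X, IsCompact K ∧ ν Kᶜ = 0) {K : ℝ≥0} {g : X → ℝ} (hg : LipschitzWith K g) :
    |∫ x, g x ∂μ - ∫ x, g x ∂ν| ≤ K * dMK μ ν := by
  rcases eq_or_ne K 0 with rfl | hK
  · have ⟨c⟩ : Nonempty X := nonempty_of_isProbabilityMeasure μ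
    have hconst : g = fun _ => g c := funext fun x => by simpa using hg.dist_le_mul x c
    rw [hconst]
    simp
  · have hK' : (0 : ℝ) < K := by positivity
    have hscaled : LipschitzWith 1 fun x => (K : ℝ)⁻¹ • g x := by
      simpa [hK, Function.comp_def] using (lipschitzWith_smul (K : ℝ)⁻¹).comp hg
    have h := abs_integral_sub_le_dMK hμ hν hscaled
    rw [integral_smul, integral_smul, ← smul_sub, smul_eq_mul, abs_mul, abs_inv,
      abs_of_pos hK', inv_mul_le_iff₀ hK'] at h
    exact h

lemma abs_integral_sum_smul_map_sub_le {Y ι : Type*} [MetricSpace Y] [MeasurableSpace Y]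
    [BorelSpace Y] [Fintype ι] {p : ι → ℝ≥0} (hp1 : ∑ j, p j = 1) {α : ℝ≥0} {φ : ι → X → Y}
    (hφ : ∀ j, LipschitzWith α (φ j)) (hμ : ∃ K : Set X, IsCompact K ∧ μ Kᶜ = 0)
    (hν : ∃ K : Set X, IsCompact K ∧ ν Kᶜ = 0) {f : Y → ℝ} (hf : LipschitzWith 1 f) :
    |∫ y, f y ∂(∑ j, p j • μ.map (φ j)) - ∫ y, f y ∂(∑ j, p j • ν.map (φ j))|
      ≤ α * dMK μ ν := by
  have hfφ (j : ι) : LipschitzWith α (f ∘ φ j) := by simpa using hf.comp (hφ j)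
  have hintegral {ρ : Measure X} [IsProbabilityMeasure ρ]
      (hρ : ∃ K : Set X, IsCompact K ∧ ρ Kᶜ = 0) :
      ∫ y, f y ∂(∑ j, p j • ρ.map (φ j)) = ∑ j, (p j : ℝ) * ∫ x, f (φ j x) ∂ρ := by
    obtain ⟨K, hK, hρK⟩ := hρ
    exact integral_finsetSum_smul_map _ p (fun j => (hφ j).continuous.measurable)
      hf.continuous.stronglyMeasurable
      fun j _ => (hfφ j).continuous.integrable_of_measure_compl_eq_zero hK hρK
  rw [hintegral hμ, hintegral hν, ← Finset.sum_sub_distrib]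
  calc |∑ j, ((p j : ℝ) * ∫ x, f (φ j x) ∂μ - (p j : ℝ) * ∫ x, f (φ j x) ∂ν)|
      ≤ ∑ j, (p j : ℝ) * |∫ x, f (φ j x) ∂μ - ∫ x, f (φ j x) ∂ν| := by
        refine (Finset.abs_sum_le_sum_abs _ _).trans_eq (Finset.sum_congr rfl fun j _ => ?_)
        rw [← mul_sub, abs_mul, NNReal.abs_eq]
    _ ≤ ∑ j, (p j : ℝ) * (α * dMK μ ν) := by
        gcongr with j
        exact (hfφ j).abs_integral_sub_le_mul_dMK hμ hν
    _ = α * dMK μ ν := by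
        rw [← Finset.sum_mul, ← NNReal.coe_sum, hp1, NNReal.coe_one, one_mul]

end MongeKantorovich

theorem stmt3_general {X : Type*} [MetricSpace X] [MeasurableSpace X] [BorelSpace X]
    {L : ℕ}
    (φ : Fin L → X → X) (p : Fin L → NNReal)
    (hp1 : ∑ j, p j = 1)
    (α : NNReal) (hφ : ∀ j, LipschitzWith α (φ j))
    (μ ν : Measure X) [IsProbabilityMeasure μ] [IsProbabilityMeasure ν]
    (hμ : ∃ K : Set X, IsCompact K ∧ μ Kᶜ = 0)
    (hν : ∃ K : Set X, IsCompact K ∧ ν Kᶜ = 0) :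
    dMK (∑ j, p j • μ.map (φ j)) (∑ j, p j • ν.map (φ j)) ≤ (α : ℝ) * dMK μ ν ∧
    ∀ f : X → ℝ, LipschitzWith 1 f →
      |∫ x, f x ∂(∑ j, p j • μ.map (φ j)) - ∫ x, f x ∂(∑ j, p j • ν.map (φ j))|
        ≤ (α : ℝ) * dMK μ ν := by
  have hmarkov (f : X → ℝ) (hf : LipschitzWith 1 f) :=
    abs_integral_sum_smul_map_sub_le hp1 hφ hμ hν hf
  exact ⟨dMK_le_of_forall_abs_integral_sub_le
    (mul_nonneg α.coe_nonneg (dMK_nonneg hμ hν)) hmarkov, hmarkov⟩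

/-- The Markov operator of an IFS with probabilities consisting of maps that are
Lipschitz with constant at most `α < 1` is Lipschitz with constant at most `α`
with respect to the Monge–Kantorovich metric. -/
theorem stmt3 {X : Type*} [MetricSpace X] [MeasurableSpace X] [BorelSpace X]
    {L : ℕ} (hL : 0 < L)
    (φ : Fin L → X → X) (p : Fin L → NNReal)
    (hp : ∀ j, 0 < p j) (hp1 : ∑ j, p j = 1)
    (α : NNReal) (hα : α < 1) (hφ : ∀ j, LipschitzWith α (φ j))
    (μ ν : Measure X) [IsProbabilityMeasure μ] [IsProbabilityMeasure ν]
    (hμ : ∃ K : Set X, IsCompact K ∧ μ Kᶜ = 0)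
    (hν : ∃ K : Set X, IsCompact K ∧ ν Kᶜ = 0) :
    dMK (∑ j, p j • μ.map (φ j)) (∑ j, p j • ν.map (φ j)) ≤ (α : ℝ) * dMK μ ν ∧
    ∀ f : X → ℝ, LipschitzWith 1 f →
      |∫ x, f x ∂(∑ j, p j • μ.map (φ j)) - ∫ x, f x ∂(∑ j, p j • ν.map (φ j))|
        ≤ (α : ℝ) * dMK μ ν :=
  stmt3_general φ p hp1 α hφ μ ν hμ hν
end

section
/- Let (X,d) be a complete metric space, m ∈ ℕ, and let f : X^m → X be Lipschitz with constant α < 1 with respect to the maximum metric on X^m. Then there exists a unique point x* ∈ X with f(x*, ..., x*) = x*, and for every choice of x_0, ..., x_{m−1} ∈ X, the sequence defined by x_{k+m} = f(x_k, x_{k+1}, ..., x_{k+m−1}) for k ≥ 0 converges to x*. -/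
/-!
Restricted to the diagonal, `f` is an `α`-contraction of `X`, so Banach's theorem gives the unique
point `x*` with `f (x*, …, x*) = x*`. For a recurrent sequence, comparing `x (k + m)` with
`x* = f (x*, …, x*)` gives `d(x (k + m), x*) ≤ α · max_{i < m} d(x (k + i), x*)`, so the distance to
`x*` shrinks by a factor `α` over each block of `m` consecutive terms:
`d(x n, x*) ≤ α ^ (n / m) · d((x 0, …, x (m - 1)), (x*, …, x*))`.
-/

open Filter Topology

theorem LipschitzWith.comp_const_pi {X Y ι : Type*} [Fintype ι] [PseudoEMetricSpace X]
    [PseudoEMetricSpace Y] {K : NNReal} {f : (ι → X) → Y} (hf : LipschitzWith K f) :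
    LipschitzWith K fun x => f fun _ => x := by
  have hconst : LipschitzWith 1 fun x : X => fun _ : ι => x := fun a b => by
    simpa using edist_pi_const_le a b
  rw [← mul_one K]
  exact hf.comp hconst

namespace LipschitzWith

variable {X : Type*} [PseudoMetricSpace X] {m : ℕ} {f : (Fin m → X) → X} {α : NNReal} {p : X}
  {x : ℕ → X}

theorem dist_recurrence_le (hf : LipschitzWith α f) (hp : f (fun _ => p) = p)
    (hx : ∀ k : ℕ, x (k + m) = f fun i => x (k + (i : ℕ))) (k : ℕ) :
    dist (x (k + m)) p ≤ α * dist (fun i : Fin m => x (k + i)) fun _ => p := by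
  rw [hx k]
  conv_lhs => rw [← hp]
  exact hf.dist_le_mul _ _

theorem dist_recurrence_le_pow_div_mul (hm : 0 < m) (hα : α ≤ 1) (hf : LipschitzWith α f)
    (hp : f (fun _ => p) = p) (hx : ∀ k : ℕ, x (k + m) = f fun i => x (k + (i : ℕ))) (n : ℕ) :
    dist (x n) p ≤ α ^ (n / m) * dist (fun i : Fin m => x i) fun _ => p := by
  induction n using Nat.strong_induction_on with
  | _ n ih =>
    rcases lt_or_ge n m with hn | hn
    · rw [Nat.div_eq_of_lt hn, pow_zero, one_mul]
      exact dist_le_pi_dist (fun i : Fin m => x i) (fun _ => p) ⟨n, hn⟩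
    · obtain ⟨k, rfl⟩ := Nat.exists_eq_add_of_le' hn
      have hwindow : dist (fun i : Fin m => x (k + i)) (fun _ => p) ≤
          α ^ (k / m) * dist (fun i : Fin m => x i) fun _ => p := by
        refine dist_pi_le_iff (by positivity) |>.mpr fun i => (ih _ (by omega)).trans ?_
        exact mul_le_mul_of_nonneg_right
          (pow_le_pow_of_le_one α.coe_nonneg hα (Nat.div_le_div_right (by omega))) dist_nonneg
      calc dist (x (k + m)) p ≤ α * dist (fun i : Fin m => x (k + i)) fun _ => p :=
            hf.dist_recurrence_le hp hx k
        _ ≤ α * (α ^ (k / m) * dist (fun i : Fin m => x i) fun _ => p) := by gcongr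
        _ = α ^ ((k + m) / m) * dist (fun i : Fin m => x i) fun _ => p := by
          rw [Nat.add_div_right k hm, pow_succ]
          ring

theorem tendsto_recurrence (hm : 0 < m) (hα : α < 1) (hf : LipschitzWith α f)
    (hp : f (fun _ => p) = p) (hx : ∀ k : ℕ, x (k + m) = f fun i => x (k + (i : ℕ))) :
    Tendsto x atTop (𝓝 p) := by
  have hpow : Tendsto (fun n : ℕ => (α : ℝ) ^ (n / m)) atTop (𝓝 0) :=
    (tendsto_pow_atTop_nhds_zero_of_lt_one α.coe_nonneg hα).comp
      (Nat.tendsto_div_const_atTop hm.ne')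
  rw [tendsto_iff_dist_tendsto_zero]
  refine squeeze_zero (fun n => dist_nonneg)
    (hf.dist_recurrence_le_pow_div_mul hm hα.le hp hx) ?_
  simpa using hpow.mul_const (dist (fun i : Fin m => x i) fun _ => p)

end LipschitzWith

/-- Generalized Banach fixed point theorem: a generalized Banach contraction
`f : Xᵐ → X` (with the maximum metric on `Xᵐ`) has a unique generalized fixed
point, and the sequences defined by `x_{k+m} = f(x_k, ..., x_{k+m-1})`
converge to it. -/
theorem stmt5 {X : Type*} [MetricSpace X] [CompleteSpace X] [Nonempty X]
    {m : ℕ} (hm : 0 < m)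
    (f : (Fin m → X) → X) (α : NNReal) (hα : α < 1) (hf : LipschitzWith α f) :
    ∃ xstar : X, f (fun _ => xstar) = xstar ∧
      (∀ y : X, f (fun _ => y) = y → y = xstar) ∧
      ∀ x : ℕ → X, (∀ k : ℕ, x (k + m) = f (fun i => x (k + (i : ℕ)))) →
        Tendsto x atTop (nhds xstar) := by
  have hdiag : ContractingWith α fun y : X => f fun _ => y := ⟨hα, hf.comp_const_pi⟩
  exact ⟨hdiag.fixedPoint, hdiag.fixedPoint_isFixedPt, fun y hy => hdiag.fixedPoint_unique hy,
    fun x hx => hf.tendsto_recurrence hm hα hdiag.fixedPoint_isFixedPt hx⟩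
end

section
/- Let (X,d) be a metric space, m ∈ ℕ, and let S = (X,(φ_j)_{j=1}^L) be a GIFS of order m in which each φ_j : X^m → X is Lipschitz with constant < 1 with respect to the maximum metric. Then the generalized Hutchinson operator F_S : K(X)^m → K(X), F_S(K_0,...,K_{m−1}) = ⋃_{j=1}^L φ_j(K_0 × ... × K_{m−1}), is Lipschitz with constant at most α_S := max{Lip(φ_j) : j = 1,...,L}: for all nonempty compact sets K_i, K'_i, h(F_S(K_0,...,K_{m−1}), F_S(K'_0,...,K'_{m−1})) ≤ α_S · max_i h(K_i, K'_i). -/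
open Metric Set
open scoped ENNReal NNReal

/-!
Each point `φ j a` of `F_S(K)`, with `a ∈ K₀ × ⋯ × K_{m-1}`, is approximated coordinatewise
by some `b ∈ K'₀ × ⋯ × K'_{m-1}`, within `max_i h(K_i, K'_i)` in the maximum metric, and then
`φ j b ∈ F_S(K')` lies within `Lip(φ_j) · max_i h(K_i, K'_i)` of it. The estimate is proved for
the extended Hausdorff distance and then transferred to `hausdorffDist`, which sends `∞` to `0`.
-/

namespace Metric

variable {α β : Type*} [PseudoEMetricSpace α] [PseudoEMetricSpace β]

theorem infEDist_pi_le {κ : Type*} {π : κ → Type*} [Fintype κ]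
    [∀ i, PseudoEMetricSpace (π i)] (x : ∀ i, π i) (K : ∀ i, Set (π i)) :
    infEDist x (univ.pi K) ≤ ⨆ i, infEDist (x i) (K i) := by
  refine le_of_forall_gt fun r hr => ?_
  have hclose : ∀ i, ∃ y ∈ K i, edist (x i) y < r := fun i =>
    infEDist_lt_iff.1 ((le_iSup (fun i => infEDist (x i) (K i)) i).trans_lt hr)
  choose y hyK hy using hclose
  calc infEDist x (univ.pi K) ≤ edist x y := infEDist_le_edist_of_mem fun i _ => hyK i
    _ < r := by
      rw [edist_pi_def]
      exact (Finset.sup_lt_iff (bot_le.trans_lt hr)).2 fun i _ => hy i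

theorem hausdorffEDist_pi_le {κ : Type*} {π : κ → Type*} [Fintype κ]
    [∀ i, PseudoEMetricSpace (π i)] (K K' : ∀ i, Set (π i)) :
    hausdorffEDist (univ.pi K) (univ.pi K') ≤ ⨆ i, hausdorffEDist (K i) (K' i) := by
  refine hausdorffEDist_le_of_infEDist (fun x hx => ?_) fun x hx => ?_
  · exact (infEDist_pi_le x K').trans <| iSup_mono fun i =>
      infEDist_le_hausdorffEDist_of_mem (hx i (mem_univ i))
  · exact (infEDist_pi_le x K).trans <| iSup_mono fun i => by
      rw [hausdorffEDist_comm]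
      exact infEDist_le_hausdorffEDist_of_mem (hx i (mem_univ i))

theorem _root_.LipschitzWith.infEDist_image_le {K : ℝ≥0} {f : α → β} (hf : LipschitzWith K f)
    {t : Set α} (ht : t.Nonempty) (x : α) :
    infEDist (f x) (f '' t) ≤ K * infEDist x t := by
  have : Nonempty t := ht.to_subtype
  calc infEDist (f x) (f '' t) ≤ ⨅ y : t, edist (f x) (f y) :=
        le_iInf fun y => infEDist_le_edist_of_mem (mem_image_of_mem f y.2)
    _ ≤ ⨅ y : t, K * edist x y := iInf_mono fun y => hf x y
    _ = K * infEDist x t := by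
        rw [← ENNReal.mul_iInf (by simp), infEDist, iInf_subtype']

theorem _root_.LipschitzWith.hausdorffEDist_image_le {K : ℝ≥0} {f : α → β}
    (hf : LipschitzWith K f) {s t : Set α} (hs : s.Nonempty) (ht : t.Nonempty) :
    hausdorffEDist (f '' s) (f '' t) ≤ K * hausdorffEDist s t := by
  refine hausdorffEDist_le_of_infEDist (forall_mem_image.2 fun x hx => ?_)
    (forall_mem_image.2 fun x hx => ?_)
  · exact (hf.infEDist_image_le ht x).trans <|
      mul_le_mul_right (infEDist_le_hausdorffEDist_of_mem hx) _
  · rw [hausdorffEDist_comm]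
    exact (hf.infEDist_image_le hs x).trans <|
      mul_le_mul_right (infEDist_le_hausdorffEDist_of_mem hx) _

end Metric

def hutchinson {ι κ X : Type*} (φ : ι → (κ → X) → X) (K : κ → Set X) : Set X :=
  ⋃ j, φ j '' univ.pi K

theorem hausdorffEDist_hutchinson_le {ι κ X : Type*} [Fintype ι] [Fintype κ]
    [PseudoEMetricSpace X] (φ : ι → (κ → X) → X) (α : ι → ℝ≥0)
    (hφ : ∀ j, LipschitzWith (α j) (φ j)) {K K' : κ → Set X}
    (hK : ∀ i, (K i).Nonempty) (hK' : ∀ i, (K' i).Nonempty) :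
    hausdorffEDist (hutchinson φ K) (hutchinson φ K')
      ≤ (Finset.univ.sup α : ℝ≥0) * ⨆ i, hausdorffEDist (K i) (K' i) :=
  calc hausdorffEDist (hutchinson φ K) (hutchinson φ K')
      ≤ ⨆ j, hausdorffEDist (φ j '' univ.pi K) (φ j '' univ.pi K') := hausdorffEDist_iUnion_le
    _ ≤ ⨆ j, α j * hausdorffEDist (univ.pi K) (univ.pi K') := iSup_mono fun j =>
        (hφ j).hausdorffEDist_image_le (univ_pi_nonempty_iff.2 hK) (univ_pi_nonempty_iff.2 hK')
    _ ≤ (Finset.univ.sup α : ℝ≥0) * ⨆ i, hausdorffEDist (K i) (K' i) := iSup_le fun j =>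
        mul_le_mul' (ENNReal.coe_le_coe.2 (Finset.le_sup (Finset.mem_univ j)))
          (hausdorffEDist_pi_le K K')

theorem stmt6_general {X : Type*} [MetricSpace X] {m L : ℕ}
    (φ : Fin L → (Fin m → X) → X) (α : Fin L → NNReal)
    (hφ : ∀ j, LipschitzWith (α j) (φ j))
    (K K' : Fin m → Set X)
    (hK : ∀ i, (K i).Nonempty) (hKc : ∀ i, IsCompact (K i))
    (hK' : ∀ i, (K' i).Nonempty) (hK'c : ∀ i, IsCompact (K' i)) :
    Metric.hausdorffDist (⋃ j, φ j '' Set.univ.pi K) (⋃ j, φ j '' Set.univ.pi K')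
      ≤ ((Finset.univ.sup α : NNReal) : ℝ) *
          ⨆ i, Metric.hausdorffDist (K i) (K' i) := by
  have hfin : ∀ i, hausdorffEDist (K i) (K' i) ≠ ⊤ := fun i =>
    hausdorffEDist_ne_top_of_nonempty_of_bounded (hK i) (hK' i)
      (hKc i).isBounded (hK'c i).isBounded
  calc hausdorffDist (hutchinson φ K) (hutchinson φ K')
      ≤ ((Finset.univ.sup α : ℝ≥0) * ⨆ i, hausdorffEDist (K i) (K' i)).toReal :=
        ENNReal.toReal_mono (ENNReal.mul_ne_top ENNReal.coe_ne_top (iSup_ne_top hfin))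
          (hausdorffEDist_hutchinson_le φ α hφ hK hK')
    _ = ((Finset.univ.sup α : ℝ≥0) : ℝ) * ⨆ i, hausdorffDist (K i) (K' i) := by
        rw [ENNReal.toReal_mul, ENNReal.toReal_iSup hfin]
        rfl

/-- The generalized Hutchinson operator of a GIFS of generalized Banach
contractions is Lipschitz with constant at most `α_S = max_j Lip(φ_j)`, with
respect to the Hausdorff–Pompeiu metric and the maximum metric on products. -/
theorem stmt6 {X : Type*} [MetricSpace X] {m L : ℕ} (hm : 0 < m) (hL : 0 < L)
    (φ : Fin L → (Fin m → X) → X) (α : Fin L → NNReal)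
    (hφ : ∀ j, LipschitzWith (α j) (φ j)) (hα : ∀ j, α j < 1)
    (K K' : Fin m → Set X)
    (hK : ∀ i, (K i).Nonempty) (hKc : ∀ i, IsCompact (K i))
    (hK' : ∀ i, (K' i).Nonempty) (hK'c : ∀ i, IsCompact (K' i)) :
    Metric.hausdorffDist (⋃ j, φ j '' Set.univ.pi K) (⋃ j, φ j '' Set.univ.pi K')
      ≤ ((Finset.univ.sup α : NNReal) : ℝ) *
          ⨆ i, Metric.hausdorffDist (K i) (K' i) :=
  stmt6_general φ α hφ K K' hK hKc hK' hK'c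
end

section
/- Let (X,d) be a complete metric space and let S = (X,(φ_j)_{j=1}^L) be a GIFS of order m in which each φ_j : X^m → X is Lipschitz with constant < 1 with respect to the maximum metric. Then there exists a unique nonempty compact set A_S ⊆ X with A_S = ⋃_{j=1}^L φ_j(A_S × ... × A_S), and for every choice of nonempty compact sets K_0, ..., K_{m−1} ⊆ X, the sequence defined by K_{k+m} := F_S(K_k, ..., K_{k+m−1}) converges to A_S in the Hausdorff–Pompeiu metric. -/
/-!
The Hutchinson operator `H(K_0, …, K_{m-1}) = ⋃ⱼ φⱼ(K_0 × ⋯ × K_{m-1})` is `c`-Lipschitz on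
`(NonemptyCompacts X)^m` with the maximum metric, where `c < 1` bounds the Lipschitz constants of
the `φⱼ`: a point of `K_0 × ⋯ × K_{m-1}` has a point of `K'_0 × ⋯ × K'_{m-1}` within the maximal
Hausdorff distance of the factors. Its diagonal `A ↦ H(A, …, A)` is therefore a contraction of the
complete space `NonemptyCompacts X`, whose Banach fixed point is the attractor. For the recursive
sequence, the distance to the attractor shrinks by the factor `c` over each block of `m`
consecutive terms, so it is at most `c ^ (n / m)` times a constant.
-/

open Filter Topology Set TopologicalSpace
open scoped NNReal ENNReal

theorem Nat.forall_of_window {m : ℕ} {p : ℕ → Prop} (hbase : ∀ n < m, p n)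
    (hstep : ∀ k, (∀ i < m, p (k + i)) → p (k + m)) (n : ℕ) : p n := by
  induction n using Nat.strong_induction_on with
  | _ n ih =>
    rcases lt_or_ge n m with hn | hn
    · exact hbase n hn
    · obtain ⟨k, rfl⟩ := Nat.exists_eq_add_of_le' hn
      exact hstep k fun i hi => ih _ (by omega)

theorem tendsto_zero_of_window_le_mul {m : ℕ} (hm : 0 < m) {c : ℝ} (hc0 : 0 ≤ c) (hc1 : c < 1)
    {d : ℕ → ℝ} (hd : ∀ n, 0 ≤ d n)
    (hstep : ∀ k R, 0 ≤ R → (∀ i < m, d (k + i) ≤ R) → d (k + m) ≤ c * R) :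
    Tendsto d atTop (𝓝 0) := by
  set M := ∑ i ∈ Finset.range m, d i
  have hM : 0 ≤ M := Finset.sum_nonneg fun i _ => hd i
  have hbound : ∀ n, d n ≤ c ^ (n / m) * M := by
    refine Nat.forall_of_window (m := m) (fun n hn => ?_) fun k ih => ?_
    · rw [Nat.div_eq_of_lt hn, pow_zero, one_mul]
      exact Finset.single_le_sum (fun i _ => hd i) (Finset.mem_range.2 hn)
    · have hwindow : ∀ i < m, d (k + i) ≤ c ^ (k / m) * M := fun i hi =>
        (ih i hi).trans <| mul_le_mul_of_nonneg_right
          (pow_le_pow_of_le_one hc0 hc1.le (Nat.div_le_div_right (Nat.le_add_right k i))) hM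
      calc d (k + m) ≤ c * (c ^ (k / m) * M) := hstep k _ (by positivity) hwindow
        _ = c ^ ((k + m) / m) * M := by rw [Nat.add_div_right _ hm, pow_succ]; ring
  have hlim : Tendsto (fun n => c ^ (n / m) * M) atTop (𝓝 0) := by
    simpa using ((tendsto_pow_atTop_nhds_zero_of_lt_one hc0 hc1).comp
      (Nat.tendsto_div_const_atTop hm.ne')).mul_const M
  exact squeeze_zero hd hbound hlim

theorem tendsto_of_window_recurrence {Y : Type*} [PseudoMetricSpace Y] {m : ℕ} (hm : 0 < m)
    {F : (Fin m → Y) → Y} {c : ℝ≥0} (hF : LipschitzWith c F) (hc : c < 1) {a : Y}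
    (ha : F (fun _ => a) = a) {x : ℕ → Y} (hx : ∀ k, x (k + m) = F fun i => x (k + i)) :
    Tendsto x atTop (𝓝 a) := by
  refine tendsto_iff_dist_tendsto_zero.2 <| tendsto_zero_of_window_le_mul hm c.coe_nonneg hc
    (fun _ => dist_nonneg) fun k R hR hwindow => ?_
  calc dist (x (k + m)) a = dist (F fun i => x (k + i)) (F fun _ => a) := by rw [hx, ha]
    _ ≤ c * dist (fun i : Fin m => x (k + i)) fun _ => a := hF.dist_le_mul _ _
    _ ≤ c * R := by
      gcongr
      exact (dist_pi_le_iff hR).2 fun i => hwindow i i.isLt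

section Hutchinson

variable {X : Type*} [EMetricSpace X] {ι κ : Type*}

theorem TopologicalSpace.NonemptyCompacts.exists_mem_pi_edist_le [Fintype κ]
    {K K' : κ → NonemptyCompacts X} {x : κ → X} (hx : ∀ i, x i ∈ K i) :
    ∃ y : κ → X, (∀ i, y i ∈ K' i) ∧ edist x y ≤ edist K K' := by
  have hnear : ∀ i, ∃ y ∈ K' i, edist (x i) y ≤ edist K K' := fun i => by
    obtain ⟨y, hy, hxy⟩ := (K' i).isCompact.exists_infEDist_eq_edist (K' i).nonempty (x i)
    refine ⟨y, hy, hxy ▸ ?_⟩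
    exact (Metric.infEDist_le_hausdorffEDist_of_mem (hx i)).trans (edist_le_pi_edist K K' i)
  choose y hy hxy using hnear
  exact ⟨y, hy, edist_pi_le_iff.2 hxy⟩

theorem LipschitzWith.hausdorffEDist_image_pi_le [Fintype κ] {f : (κ → X) → X} {c : ℝ≥0}
    (hf : LipschitzWith c f) (K K' : κ → NonemptyCompacts X) :
    Metric.hausdorffEDist (f '' univ.pi fun i => K i) (f '' univ.pi fun i => K' i)
      ≤ c * edist K K' := by
  refine Metric.hausdorffEDist_le_of_mem_edist ?_ ?_
  · rintro _ ⟨x, hx, rfl⟩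
    obtain ⟨y, hy, hxy⟩ := NonemptyCompacts.exists_mem_pi_edist_le (K' := K') fun i => hx i trivial
    exact ⟨f y, mem_image_of_mem f fun i _ => hy i, (hf.edist_le_mul x y).trans (by gcongr)⟩
  · rintro _ ⟨x, hx, rfl⟩
    obtain ⟨y, hy, hxy⟩ := NonemptyCompacts.exists_mem_pi_edist_le (K' := K) fun i => hx i trivial
    exact ⟨f y, mem_image_of_mem f fun i _ => hy i,
      (hf.edist_le_mul x y).trans (by rw [edist_comm K]; gcongr)⟩

variable [Finite ι] [Nonempty ι] [Fintype κ] {φ : ι → (κ → X) → X}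

def hutchinsonOp (hφ : ∀ j, Continuous (φ j)) (K : κ → NonemptyCompacts X) :
    NonemptyCompacts X where
  carrier := ⋃ j, φ j '' univ.pi fun i => K i
  isCompact' := isCompact_iUnion fun j =>
    (isCompact_univ_pi fun i => (K i).isCompact).image (hφ j)
  nonempty' := by
    obtain ⟨x, hx⟩ := univ_pi_nonempty_iff.2 fun i => (K i).nonempty
    exact ⟨φ (Classical.arbitrary ι) x, mem_iUnion.2 ⟨_, mem_image_of_mem _ hx⟩⟩

theorem lipschitzWith_hutchinsonOp {c : ℝ≥0} (hφ : ∀ j, LipschitzWith c (φ j)) :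
    LipschitzWith c (hutchinsonOp fun j => (hφ j).continuous) := fun K K' =>
  Metric.hausdorffEDist_iUnion_le.trans <| iSup_le fun j => (hφ j).hausdorffEDist_image_pi_le K K'

end Hutchinson

/-- A GIFS of generalized Banach contractions on a complete metric space admits a
unique attractor, and the set sequences `K_{k+m} = F_S(K_k, ..., K_{k+m-1})`
converge to it in the Hausdorff–Pompeiu metric. -/
theorem stmt7 {X : Type*} [MetricSpace X] [CompleteSpace X] [Nonempty X]
    {m L : ℕ} (hm : 0 < m) (hL : 0 < L)
    (φ : Fin L → (Fin m → X) → X) (α : Fin L → NNReal)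
    (hφ : ∀ j, LipschitzWith (α j) (φ j)) (hα : ∀ j, α j < 1) :
    ∃ A : Set X, A.Nonempty ∧ IsCompact A ∧
      A = ⋃ j, φ j '' Set.univ.pi (fun _ => A) ∧
      (∀ B : Set X, B.Nonempty → IsCompact B →
        B = ⋃ j, φ j '' Set.univ.pi (fun _ => B) → B = A) ∧
      ∀ K : ℕ → Set X,
        (∀ i, i < m → (K i).Nonempty ∧ IsCompact (K i)) →
        (∀ k : ℕ, K (k + m) = ⋃ j, φ j '' Set.univ.pi (fun i : Fin m => K (k + (i : ℕ)))) →
        Tendsto (fun n => Metric.hausdorffDist (K n) A) atTop (nhds 0) := by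
  have : Nonempty (Fin L) := ⟨⟨0, hL⟩⟩
  obtain ⟨c, hc, hαc⟩ : ∃ c < 1, ∀ j, α j ≤ c :=
    ⟨Finset.univ.sup α, (Finset.sup_lt_iff zero_lt_one).2 fun j _ => hα j,
      fun j => Finset.le_sup (Finset.mem_univ j)⟩
  have hφc : ∀ j, LipschitzWith c (φ j) := fun j => (hφ j).weaken (hαc j)
  let H := hutchinsonOp fun j => (hφc j).continuous
  have hT : ContractingWith c fun A => H fun _ => A := ⟨hc,
    ((lipschitzWith_hutchinsonOp hφc).comp (.of_edist_le edist_pi_const_le)).weaken (mul_one _).le⟩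
  set A := ContractingWith.fixedPoint _ hT
  refine ⟨A, A.nonempty, A.isCompact, congrArg SetLike.coe hT.fixedPoint_isFixedPt.symm,
    fun B hBn hBc hB => congrArg SetLike.coe (hT.fixedPoint_unique (x := ⟨⟨B, hBc⟩, hBn⟩)
      (NonemptyCompacts.ext hB.symm)), fun K hK₀ hK => ?_⟩
  have hKc : ∀ n, (K n).Nonempty ∧ IsCompact (K n) := Nat.forall_of_window hK₀ fun k hwindow => by
    let K' : Fin m → NonemptyCompacts X :=
      fun i => ⟨⟨K (k + i), (hwindow i i.isLt).2⟩, (hwindow i i.isLt).1⟩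
    rw [hK]
    exact ⟨(H K').nonempty, (H K').isCompact⟩
  let K' : ℕ → NonemptyCompacts X := fun n => ⟨⟨K n, (hKc n).2⟩, (hKc n).1⟩
  have hK'lim : Tendsto K' atTop (𝓝 A) := tendsto_of_window_recurrence hm
    (lipschitzWith_hutchinsonOp hφc) hc hT.fixedPoint_isFixedPt fun k => NonemptyCompacts.ext (hK k)
  exact tendsto_iff_dist_tendsto_zero.1 hK'lim
end

section
/- Let (X,d) be a metric space and let S = (X,(φ_j)_{j=1}^L,(p_j)_{j=1}^L) be a GIFS with probabilities of order m consisting of continuous maps. Then for every compactly supported Borel probability measure μ on X, supp(M̄_S(μ)) = F̄_S(supp(μ)), i.e. the support of M̄_S(μ) := Σ_{j=1}^L p_j · φ_j♯(μ × ... × μ) equals ⋃_{j=1}^L φ_j(supp(μ) × ... × supp(μ)). -/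
/-! Taking supports commutes with finite sums and positive scalings, turns a finite product of
measures into the product of the supports, and turns the pushforward of a measure with compact
conull support along a continuous map into the image of that support. The support of `μ` is compact
and conull by inner regularity, since some compact set is conull. The one subtlety is
measurability: the product σ-algebra on `Xᵐ` need not be Borel, but `φ j` agrees on the conull set
`(supp μ)ᵐ` with a measurable map, obtained by first retracting onto the second countable
`supp μ`. -/

open MeasureTheory

/-- The topological support of a Borel measure. -/
def msupport {X : Type*} [TopologicalSpace X] [MeasurableSpace X]
    (μ : Measure X) : Set X :=
  {x | ∀ U : Set X, IsOpen U → x ∈ U → 0 < μ U}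

open Set Filter TopologicalSpace

open scoped ENNReal

theorem msupport_eq_support {X : Type*} [TopologicalSpace X] [MeasurableSpace X]
    (μ : Measure X) : msupport μ = μ.support := by
  ext x
  rw [Measure.support_eq_forall_isOpen]
  exact forall_congr' fun _ => Imp.swap

namespace MeasureTheory.Measure

section Support

variable {X Y : Type*} [TopologicalSpace X] [MeasurableSpace X]
  [TopologicalSpace Y] [MeasurableSpace Y]

theorem support_mem_ae_of_isCompact [PseudoMetrizableSpace X] {μ : Measure X} {K : Set X}
    (hK : IsCompact K) (hμK : K ∈ ae μ) : μ.support ∈ ae μ :=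
  support_mem_ae_of_innerRegularWRT_isCompact_isOpen <|
    (innerRegularWRT_of_exists_compl_lt (fun _ _ hA hB => hA.inter_right hB)
      fun _ hε => ⟨K, hK, (mem_ae_iff.1 hμK).symm ▸ hε⟩).trans
    (InnerRegularWRT.of_pseudoMetrizableSpace μ)

theorem isCompact_support_of_isCompact [T2Space X] {μ : Measure X} {K : Set X}
    (hK : IsCompact K) (hμK : K ∈ ae μ) : IsCompact μ.support :=
  hK.of_isClosed_subset isClosed_support (support_subset_of_isClosed hK.isClosed hμK)

theorem support_smul {c : ℝ≥0∞} (hc : c ≠ 0) (μ : Measure X) : (c • μ).support = μ.support := by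
  ext x
  simp only [support_eq_forall_isOpen, mem_ofPred_eq, smul_apply, smul_eq_mul,
    ENNReal.mul_pos_iff, pos_iff_ne_zero.2 hc, true_and]

theorem support_finset_sum {ι : Type*} (s : Finset ι) (μ : ι → Measure X) :
    (∑ i ∈ s, μ i).support = ⋃ i ∈ s, (μ i).support := by
  classical
  induction s using Finset.induction_on with
  | empty => simp
  | insert i s hi ih => rw [Finset.sum_insert hi, support_add, ih, Finset.set_biUnion_insert]

variable [OpensMeasurableSpace Y] {μ : Measure X} {f : X → Y}

theorem image_support_subset_support_map (hf : Continuous f) (hfm : AEMeasurable f μ) :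
    f '' μ.support ⊆ (μ.map f).support := by
  rintro _ ⟨x, hx, rfl⟩
  rw [support_eq_forall_isOpen] at hx ⊢
  intro U hxU hU
  rw [map_apply_of_aemeasurable hfm hU.measurableSet]
  exact hx _ hxU (hU.preimage hf)

theorem support_map_subset_closure_image (hfm : AEMeasurable f μ) (hμ : μ.support ∈ ae μ) :
    (μ.map f).support ⊆ closure (f '' μ.support) :=
  support_subset_of_isClosed isClosed_closure <|
    (mem_ae_map_iff hfm isClosed_closure.measurableSet).2 <|
      mem_of_superset hμ fun _ hx => subset_closure (mem_image_of_mem f hx)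

theorem support_map_of_isCompact [T2Space Y] (hf : Continuous f) (hfm : AEMeasurable f μ)
    (hc : IsCompact μ.support) (hμ : μ.support ∈ ae μ) :
    (μ.map f).support = f '' μ.support :=
  (support_map_subset_closure_image hfm hμ).trans (hc.image hf).isClosed.closure_subset
    |>.antisymm (image_support_subset_support_map hf hfm)

end Support

section Pi

variable {ι : Type*} [Fintype ι] {X : ι → Type*} [∀ i, MeasurableSpace (X i)]
  (μ : ∀ i, Measure (X i)) [∀ i, SigmaFinite (μ i)]

theorem univ_pi_mem_ae_pi {s : ∀ i, Set (X i)} (hs : ∀ i, s i ∈ ae (μ i)) :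
    univ.pi s ∈ ae (Measure.pi μ) :=
  ae_pi_le_pi (pi_mem_pi finite_univ fun i _ => hs i)

theorem support_pi [∀ i, TopologicalSpace (X i)] :
    (Measure.pi μ).support = univ.pi fun i => (μ i).support := by
  ext x
  simp only [support_eq_forall_isOpen, mem_ofPred_eq, mem_univ_pi]
  constructor
  · intro hx i U hxU hU
    exact pos_iff_ne_zero.2 fun h => (hx _ (show x ∈ Function.eval i ⁻¹' U from hxU)
      (hU.preimage (continuous_apply i))).ne' (pi_eval_preimage_null μ h)
  · intro hx W hxW hW
    obtain ⟨u, hu, huW⟩ := isOpen_pi_iff'.1 hW x hxW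
    calc 0 < ∏ i, μ i (u i) := CanonicallyOrderedAdd.prod_pos.2 fun i _ => hx i _ (hu i).2 (hu i).1
      _ = Measure.pi μ (univ.pi u) := (pi_pi μ u).symm
      _ ≤ Measure.pi μ W := measure_mono huW

end Pi

end MeasureTheory.Measure

theorem Continuous.aemeasurable_of_univ_pi_mem_ae {ι X Y : Type*} [Countable ι]
    [TopologicalSpace X] [PseudoMetrizableSpace X] [MeasurableSpace X] [OpensMeasurableSpace X]
    [TopologicalSpace Y] [MeasurableSpace Y] [BorelSpace Y] {f : (ι → X) → Y} (hf : Continuous f)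
    {C : Set X} (hCm : MeasurableSet C) (hCs : IsSeparable C) (hC : C.Nonempty)
    {ν : Measure (ι → X)} (hν : univ.pi (fun _ => C) ∈ ae ν) : AEMeasurable f ν := by
  obtain ⟨c, hc⟩ := hC
  have := hCs.secondCountableTopology
  classical
  -- `f ∘ (r ∘ ·)` is Borel because `(ι → C)` is second countable, and equals `f` on `univ.pi C`
  let r : X → C := fun x => ⟨C.piecewise id (fun _ => c) x, by
    by_cases hx : x ∈ C <;> simp [hx, hc]⟩
  have hr : Measurable r := (Measurable.piecewise hCm measurable_id measurable_const).subtype_mk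
  refine ⟨fun y => f fun i => r (y i), ?_, ?_⟩
  · exact (hf.comp (continuous_pi fun i => continuous_subtype_val.comp
      (continuous_apply i))).measurable.comp (measurable_pi_lambda _ fun i => hr.comp
        (measurable_pi_apply i))
  · filter_upwards [hν] with y hy
    congr
    funext i
    simp [r, hy i (mem_univ i)]

theorem stmt12_general {X : Type*} [MetricSpace X] [MeasurableSpace X] [BorelSpace X]
    {m L : ℕ}
    (φ : Fin L → (Fin m → X) → X) (hφ : ∀ j, Continuous (φ j))
    (p : Fin L → NNReal) (hp : ∀ j, 0 < p j)
    (μ : Measure X) [IsProbabilityMeasure μ]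
    (hμ : ∃ K : Set X, IsCompact K ∧ μ Kᶜ = 0) :
    msupport (∑ j, p j • (Measure.pi fun _ : Fin m => μ).map (φ j))
      = ⋃ j, φ j '' Set.univ.pi (fun _ : Fin m => msupport μ) := by
  obtain ⟨K, hK, hμK⟩ := hμ
  have hae : μ.support ∈ ae μ := Measure.support_mem_ae_of_isCompact hK hμK
  have hcpt : IsCompact μ.support := Measure.isCompact_support_of_isCompact hK hμK
  set P := Measure.pi fun _ : Fin m => μ
  have hPae : P.support ∈ ae P := by
    rw [Measure.support_pi]
    exact Measure.univ_pi_mem_ae_pi _ fun _ => hae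
  have hPc : IsCompact P.support := by
    rw [Measure.support_pi]
    exact isCompact_univ_pi fun _ => hcpt
  have hmeas (j : Fin L) : AEMeasurable (φ j) P :=
    (hφ j).aemeasurable_of_univ_pi_mem_ae hcpt.measurableSet hcpt.isSeparable
      (nonempty_of_mem hae) (Measure.univ_pi_mem_ae_pi _ fun _ => hae)
  simp_rw [msupport_eq_support, ENNReal.smul_def, Measure.support_finset_sum,
    Measure.support_smul (ENNReal.coe_ne_zero.2 (hp _).ne'), Finset.mem_univ, iUnion_true]
  refine iUnion_congr fun j => ?_
  rw [Measure.support_map_of_isCompact (hφ j) (hmeas j) hPc hPae, Measure.support_pi]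

/-- For a GIFS with probabilities, the support of the image of a compactly
supported probability measure under the diagonal generalized Markov operator is
the image of its support under the diagonal generalized Hutchinson operator. -/
theorem stmt12 {X : Type*} [MetricSpace X] [MeasurableSpace X] [BorelSpace X]
    {m L : ℕ} (hm : 1 ≤ m) (hL : 0 < L)
    (φ : Fin L → (Fin m → X) → X) (hφ : ∀ j, Continuous (φ j))
    (p : Fin L → NNReal) (hp : ∀ j, 0 < p j) (hp1 : ∑ j, p j = 1)
    (μ : Measure X) [IsProbabilityMeasure μ]
    (hμ : ∃ K : Set X, IsCompact K ∧ μ Kᶜ = 0) :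
    msupport (∑ j, p j • (Measure.pi fun _ : Fin m => μ).map (φ j))
      = ⋃ j, φ j '' Set.univ.pi (fun _ : Fin m => msupport μ) :=
  stmt12_general φ hφ p hp μ hμ
end
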